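/- arXiv:1902.08685 — 2 statements merged into one kernel-verified Lean document; each statement's English description precedes it below -/
import Mathlib

section
/- Let a > 0, Ω = (−a,a), T̂ > 0, and A > 0. Let (ε_k) be a sequence of positive numbers with ε_k → 0, and let h_k : [−a,a] × [0,T̂] → ℝ be continuous functions with |h_k| ≤ A for all k, converging uniformly on [−a,a] × [0,T̂] to a function h. Suppose there is B < ∞ with ∫_{−a}^{a} G_{ε_k}(h_k(x,t)) dx ≤ B for all k and all t ∈ [0,T̂]. Then for every t ∈ [0,T̂], the function x ↦ 1/h(x,t) is integrable on Ω and ∫_{−a}^{a} dx/h(x,t) ≤ 2·( B + 2a/A ); in particular ∫_Ω dx/h(x,t) is bounded uniformly in t. -/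
/-!
For `0 < s ≤ A` one has `1 / (u³ + ε) ≥ (s³ / (s³ + ε)) / u³` on `[s, A]`, so integrating twice
gives `G_ε(s) ≥ s³ / (s³ + ε) · (1 / (2s) - 1 / A)`. Hence
`liminf G_{ε_k}(h_k(x)) ≥ 1 / (2h(x)) - 1 / A` where `h(x) > 0`, while the liminf is infinite
where `h(x) ≤ 0`, since `G_ε` is antitone on `(-∞, A]` and its lower bound blows up at `0⁺`.
Fatou's lemma bounds the integral of the liminf by `B`, so `h > 0` almost everywhere and
`∫ 1 / (2h) ≤ B + |Ω| / A`.
-/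

/-- `g_ε(s) = -∫_s^A dr / (|r|³ + ε)`. -/
noncomputable def gEps (A ε s : ℝ) : ℝ := -∫ r in s..A, 1 / (|r| ^ 3 + ε)

/-- `G_ε(s) = -∫_s^A g_ε(r) dr`. -/
noncomputable def GEps (A ε s : ℝ) : ℝ := -∫ r in s..A, gEps A ε r

open MeasureTheory Filter Set Topology
open scoped ENNReal

lemma integral_inv_pow_three {a b : ℝ} (ha : 0 < a) (hb : 0 < b) :
    ∫ u in a..b, (u ^ 3)⁻¹ = ((a ^ 2)⁻¹ - (b ^ 2)⁻¹) / 2 := by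
  have := integral_zpow (a := a) (b := b) (n := -3) (Or.inr ⟨by norm_num, notMem_uIcc_of_lt ha hb⟩)
  simp only [zpow_neg] at this
  norm_num at this
  rw [this]
  ring

lemma integral_inv_sq {a b : ℝ} (ha : 0 < a) (hb : 0 < b) :
    ∫ u in a..b, (u ^ 2)⁻¹ = a⁻¹ - b⁻¹ := by
  have := integral_zpow (a := a) (b := b) (n := -2) (Or.inr ⟨by norm_num, notMem_uIcc_of_lt ha hb⟩)
  simp only [zpow_neg] at this
  norm_num at this
  rw [this]
  ring

lemma gEps_eq_integral (A ε s : ℝ) : gEps A ε s = ∫ r in A..s, 1 / (|r| ^ 3 + ε) := by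
  rw [gEps, intervalIntegral.integral_symm, neg_neg]

lemma GEps_eq_integral (A ε s : ℝ) : GEps A ε s = ∫ r in A..s, gEps A ε r := by
  rw [GEps, intervalIntegral.integral_symm, neg_neg]

section GEps

variable {A ε : ℝ}

lemma continuous_one_div_abs_pow_three_add (hε : 0 < ε) :
    Continuous fun u : ℝ => 1 / (|u| ^ 3 + ε) :=
  continuous_const.div (by fun_prop) fun u => by positivity

lemma continuous_gEps (hε : 0 < ε) : Continuous (gEps A ε) := by
  simpa only [← funext (gEps_eq_integral A ε)] using
    intervalIntegral.continuous_primitive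
      (fun a b => (continuous_one_div_abs_pow_three_add hε).intervalIntegrable (μ := volume) a b) A

lemma hasDerivAt_GEps (hε : 0 < ε) (s : ℝ) : HasDerivAt (GEps A ε) (gEps A ε s) s := by
  simpa only [← funext (GEps_eq_integral A ε)] using
    ((continuous_gEps (A := A) hε).integral_hasStrictDerivAt A s).hasDerivAt

lemma continuous_GEps (hε : 0 < ε) : Continuous (GEps A ε) :=
  continuous_iff_continuousAt.2 fun s => (hasDerivAt_GEps hε s).continuousAt

lemma gEps_nonpos (hε : 0 < ε) {s : ℝ} (hs : s ≤ A) : gEps A ε s ≤ 0 := by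
  rw [gEps, neg_nonpos]
  exact intervalIntegral.integral_nonneg hs fun u _ => by positivity

lemma GEps_antitoneOn (hε : 0 < ε) : AntitoneOn (GEps A ε) (Iic A) := by
  refine antitoneOn_of_hasDerivWithinAt_nonpos (convex_Iic A) (continuous_GEps hε).continuousOn
    (fun s _ => (hasDerivAt_GEps hε s).hasDerivWithinAt) fun s hs => gEps_nonpos hε ?_
  rw [interior_Iic] at hs
  exact hs.le

lemma GEps_nonneg (hε : 0 < ε) {s : ℝ} (hs : s ≤ A) : 0 ≤ GEps A ε s := by
  simpa [GEps] using GEps_antitoneOn hε hs (mem_Iic.2 le_rfl) hs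

lemma le_GEps_of_pos (hε : 0 < ε) {s : ℝ} (hs : 0 < s) (hsA : s ≤ A) :
    s ^ 3 / (s ^ 3 + ε) * (1 / (2 * s) - 1 / A) ≤ GEps A ε s := by
  set c := s ^ 3 / (s ^ 3 + ε)
  have hA : 0 < A := hs.trans_le hsA
  have hpos : ∀ r ∈ Icc s A, uIcc r A ⊆ Ioi 0 := fun r hr u hu =>
    hs.trans_le (hr.1.trans (uIcc_of_le hr.2 ▸ hu).1)
  have hinv : ∀ n : ℕ, ContinuousOn (fun u : ℝ => (u ^ n)⁻¹) (Ioi 0) := fun n =>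
    (continuousOn_pow n).inv₀ fun u hu => pow_ne_zero n (ne_of_gt hu)
  -- on `[s, A]`, `1 / (u³ + ε) ≥ c / u³` because `u³ / (u³ + ε)` increases with `u`
  have hpoint : ∀ u ∈ Icc s A, c * (u ^ 3)⁻¹ ≤ 1 / (|u| ^ 3 + ε) := by
    intro u hu
    have hu0 : 0 < u := hs.trans_le hu.1
    have hsu : s ^ 3 ≤ u ^ 3 := pow_le_pow_left₀ hs.le hu.1 3
    rw [abs_of_pos hu0, ← div_eq_mul_inv, div_div, div_le_div_iff₀ (by positivity) (by positivity)]
    nlinarith [mul_le_mul_of_nonneg_right hsu hε.le]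
  have hinner : ∀ r ∈ Icc s A, c * (((r ^ 2)⁻¹ - (A ^ 2)⁻¹) / 2) ≤ -gEps A ε r := by
    intro r hr
    rw [gEps, neg_neg, ← integral_inv_pow_three (hs.trans_le hr.1) hA,
      ← intervalIntegral.integral_const_mul]
    exact intervalIntegral.integral_mono_on hr.2
      ((continuousOn_const.mul ((hinv 3).mono (hpos r hr))).intervalIntegrable)
      ((continuous_one_div_abs_pow_three_add hε).intervalIntegrable _ _)
      fun u hu => hpoint u ⟨hr.1.trans hu.1, hu.2⟩
  have houter :
      ∫ r in s..A, ((r ^ 2)⁻¹ - (A ^ 2)⁻¹) / 2 = 1 / (2 * s) - 1 / A + s / (2 * A ^ 2) := by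
    rw [intervalIntegral.integral_div, intervalIntegral.integral_sub
      (((hinv 2).mono (hpos s ⟨le_rfl, hsA⟩)).intervalIntegrable) intervalIntegrable_const,
      integral_inv_sq hs hA, intervalIntegral.integral_const, smul_eq_mul]
    field_simp
    ring
  calc c * (1 / (2 * s) - 1 / A)
      ≤ c * (1 / (2 * s) - 1 / A + s / (2 * A ^ 2)) := by
        gcongr; exact le_add_of_nonneg_right (by positivity)
    _ = ∫ r in s..A, c * (((r ^ 2)⁻¹ - (A ^ 2)⁻¹) / 2) := by
        rw [intervalIntegral.integral_const_mul, houter]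
    _ ≤ ∫ r in s..A, -gEps A ε r :=
        intervalIntegral.integral_mono_on hsA
          ((continuousOn_const.mul ((((hinv 2).sub continuousOn_const).div_const 2).mono
            (hpos s ⟨le_rfl, hsA⟩))).intervalIntegrable)
          ((continuous_gEps hε).neg.intervalIntegrable _ _) hinner
    _ = GEps A ε s := by rw [GEps, intervalIntegral.integral_neg]

end GEps

section Liminf

variable {A : ℝ} {ε s : ℕ → ℝ} {s₀ : ℝ}

lemma ofReal_le_liminf_GEps (hεpos : ∀ k, 0 < ε k) (hε : Tendsto ε atTop (𝓝 0))
    (hs₀ : 0 < s₀) (hs : Tendsto s atTop (𝓝 s₀)) (hsA : ∀ k, s k ≤ A) :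
    ENNReal.ofReal (1 / (2 * s₀) - 1 / A) ≤
      liminf (fun k => ENNReal.ofReal (GEps A (ε k) (s k))) atTop := by
  have h3 : s₀ ^ 3 ≠ 0 := by positivity
  have hlim : Tendsto (fun k => s k ^ 3 / (s k ^ 3 + ε k) * (1 / (2 * s k) - 1 / A)) atTop
      (𝓝 (1 / (2 * s₀) - 1 / A)) := by
    simpa [h3] using ((hs.pow 3).div ((hs.pow 3).add hε) (by simpa using h3)).mul
      (((tendsto_const_nhds (x := 1)).div (hs.const_mul 2) (by positivity)).sub
        (tendsto_const_nhds (x := 1 / A)))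
  rw [← (ENNReal.tendsto_ofReal hlim).liminf_eq]
  refine liminf_le_liminf ?_
  filter_upwards [hs.eventually (eventually_gt_nhds hs₀)] with k hk
  exact ENNReal.ofReal_le_ofReal (le_GEps_of_pos (hεpos k) hk (hsA k))

lemma liminf_GEps_eq_top (hA : 0 < A) (hεpos : ∀ k, 0 < ε k) (hε : Tendsto ε atTop (𝓝 0))
    (hs₀ : s₀ ≤ 0) (hs : Tendsto s atTop (𝓝 s₀)) (hsA : ∀ k, s k ≤ A) :
    liminf (fun k => ENNReal.ofReal (GEps A (ε k) (s k))) atTop = ⊤ := by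
  have hbound : ∀ δ ∈ Ioo 0 A, ENNReal.ofReal (1 / (2 * δ) - 1 / A) ≤
      liminf (fun k => ENNReal.ofReal (GEps A (ε k) (s k))) atTop := by
    intro δ hδ
    refine (ofReal_le_liminf_GEps hεpos hε hδ.1 tendsto_const_nhds fun _ => hδ.2.le).trans
      (liminf_le_liminf ?_)
    filter_upwards [hs.eventually (eventually_le_nhds (hs₀.trans_lt hδ.1))] with k hk
    exact ENNReal.ofReal_le_ofReal (GEps_antitoneOn (hεpos k) (hsA k) hδ.2.le hk)
  have htop : Tendsto (fun δ : ℝ => ENNReal.ofReal (1 / (2 * δ) - 1 / A)) (𝓝[>] 0) (𝓝 ⊤) := by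
    refine ENNReal.tendsto_ofReal_atTop.comp (tendsto_atTop_add_const_right _ _ ?_)
    simpa [mul_comm] using tendsto_inv_nhdsGT_zero.const_mul_atTop (by norm_num : (0 : ℝ) < 1 / 2)
  exact top_le_iff.1 (le_of_tendsto htop (eventually_of_mem (Ioo_mem_nhdsGT hA) hbound))

end Liminf

section Fatou

variable {α : Type*} [MeasurableSpace α] {μ : Measure α}

lemma integrable_and_integral_le_of_lintegral_le {f : α → ℝ} {C : ℝ}
    (hf : AEStronglyMeasurable f μ) (hf₀ : 0 ≤ᵐ[μ] f) (hC : 0 ≤ C)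
    (h : ∫⁻ x, ENNReal.ofReal (f x) ∂μ ≤ ENNReal.ofReal C) :
    Integrable f μ ∧ ∫ x, f x ∂μ ≤ C := by
  refine ⟨⟨hf, (hasFiniteIntegral_iff_ofReal hf₀).2 (h.trans_lt ENNReal.ofReal_lt_top)⟩, ?_⟩
  rw [integral_eq_lintegral_of_nonneg_ae hf₀ hf]
  exact ENNReal.toReal_le_of_le_ofReal hC h

lemma aemeasurable_liminf {f : ℕ → α → ℝ≥0∞} (hf : ∀ k, AEMeasurable (f k) μ) :
    AEMeasurable (fun x => liminf (fun k => f k x) atTop) μ := by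
  simp_rw [liminf_eq_iSup_iInf_of_nat]
  exact .iSup fun n => .biInf _ (to_countable _) fun i _ => hf i

lemma aemeasurable_ofReal_GEps {A ε : ℝ} (hε : 0 < ε) {u : α → ℝ} (hu : AEMeasurable u μ) :
    AEMeasurable (fun x => ENNReal.ofReal (GEps A ε (u x))) μ :=
  ENNReal.measurable_ofReal.comp_aemeasurable ((continuous_GEps hε).measurable.comp_aemeasurable hu)

variable {A B : ℝ} {ε : ℕ → ℝ} {u : ℕ → α → ℝ}

lemma lintegral_liminf_GEps_le (hεpos : ∀ k, 0 < ε k) (hu : ∀ k, AEMeasurable (u k) μ)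
    (huA : ∀ k, ∀ᵐ x ∂μ, u k x ≤ A)
    (hint : ∀ k, Integrable (fun x => GEps A (ε k) (u k x)) μ)
    (hB : ∀ k, ∫ x, GEps A (ε k) (u k x) ∂μ ≤ B) :
    ∫⁻ x, liminf (fun k => ENNReal.ofReal (GEps A (ε k) (u k x))) atTop ∂μ ≤
      ENNReal.ofReal B := by
  refine (lintegral_liminf_le' fun k => aemeasurable_ofReal_GEps (hεpos k) (hu k)).trans
    (liminf_le_of_frequently_le' (Frequently.of_forall fun k => ?_))
  rw [← ofReal_integral_eq_lintegral_ofReal (hint k)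
    ((huA k).mono fun x hx => GEps_nonneg (hεpos k) hx)]
  exact ENNReal.ofReal_le_ofReal (hB k)

theorem integrable_inv_of_integral_GEps_le [IsFiniteMeasure μ] (hA : 0 < A)
    (hεpos : ∀ k, 0 < ε k) (hε : Tendsto ε atTop (𝓝 0)) {v : α → ℝ}
    (hu : ∀ k, AEMeasurable (u k) μ) (huA : ∀ k, ∀ᵐ x ∂μ, u k x ≤ A)
    (hlim : ∀ᵐ x ∂μ, Tendsto (fun k => u k x) atTop (𝓝 (v x)))
    (hint : ∀ k, Integrable (fun x => GEps A (ε k) (u k x)) μ)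
    (hB : ∀ k, ∫ x, GEps A (ε k) (u k x) ∂μ ≤ B) :
    Integrable (fun x => 1 / v x) μ ∧ ∫ x, 1 / v x ∂μ ≤ 2 * (B + μ.real univ / A) := by
  set ψ : α → ℝ≥0∞ := fun x => liminf (fun k => ENNReal.ofReal (GEps A (ε k) (u k x))) atTop
  have hfatou : ∫⁻ x, ψ x ∂μ ≤ ENNReal.ofReal B := lintegral_liminf_GEps_le hεpos hu huA hint hB
  have hB₀ : 0 ≤ B := (integral_nonneg_of_ae
    ((huA 0).mono fun x hx => GEps_nonneg (hεpos 0) hx)).trans (hB 0)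
  have hψ : ∀ᵐ x ∂μ, ψ x < ⊤ :=
    ae_lt_top' (aemeasurable_liminf fun k => aemeasurable_ofReal_GEps (hεpos k) (hu k))
      (hfatou.trans_lt ENNReal.ofReal_lt_top).ne
  have hv : ∀ᵐ x ∂μ, 0 < v x := by
    filter_upwards [hψ, hlim, ae_all_iff.2 huA] with x hx hxlim hxA
    by_contra! hle
    exact hx.ne (liminf_GEps_eq_top hA hεpos hε hle hxlim hxA)
  have hpoint : ∀ᵐ x ∂μ, ENNReal.ofReal (1 / v x) ≤ 2 * ψ x + ENNReal.ofReal (2 / A) := by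
    filter_upwards [hv, hlim, ae_all_iff.2 huA] with x hx hxlim hxA
    calc ENNReal.ofReal (1 / v x) = ENNReal.ofReal (2 * (1 / (2 * v x) - 1 / A) + 2 / A) := by
          congr 1; field_simp; ring
      _ ≤ 2 * ENNReal.ofReal (1 / (2 * v x) - 1 / A) + ENNReal.ofReal (2 / A) := by
          rw [← ENNReal.ofReal_ofNat 2, ← ENNReal.ofReal_mul zero_le_two]
          exact ENNReal.ofReal_add_le
      _ ≤ 2 * ψ x + ENNReal.ofReal (2 / A) := by
          gcongr; exact ofReal_le_liminf_GEps hεpos hε hx hxlim hxA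
  refine integrable_and_integral_le_of_lintegral_le
    ((aemeasurable_of_tendsto_metrizable_ae' hu hlim).const_div 1).aestronglyMeasurable
    (hv.mono fun x hx => by positivity) (by positivity) ?_
  calc ∫⁻ x, ENNReal.ofReal (1 / v x) ∂μ ≤ ∫⁻ x, 2 * ψ x + ENNReal.ofReal (2 / A) ∂μ :=
        lintegral_mono_ae hpoint
    _ = 2 * ∫⁻ x, ψ x ∂μ + ENNReal.ofReal (2 / A) * μ univ := by
        rw [lintegral_add_right _ measurable_const, lintegral_const_mul' _ _ ENNReal.ofNat_ne_top,
          lintegral_const]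
    _ ≤ 2 * ENNReal.ofReal B + ENNReal.ofReal (2 / A) * ENNReal.ofReal (μ.real univ) := by
        rw [ofReal_measureReal]; gcongr
    _ = ENNReal.ofReal (2 * (B + μ.real univ / A)) := by
        rw [← ENNReal.ofReal_ofNat 2, ← ENNReal.ofReal_mul zero_le_two,
          ← ENNReal.ofReal_mul (by positivity),
          ← ENNReal.ofReal_add (by positivity) (by positivity)]
        congr 1; ring

end Fatou

theorem limit_reciprocal_integrable_and_bounded_general
    (a Thatt A B : ℝ) (ha : 0 < a) (hA : 0 < A)
    (εk : ℕ → ℝ) (hεpos : ∀ k, 0 < εk k)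
    (hεlim : Filter.Tendsto εk Filter.atTop (nhds 0))
    (hk : ℕ → ℝ → ℝ → ℝ) (h : ℝ → ℝ → ℝ)
    (hcont : ∀ k, ContinuousOn (fun p : ℝ × ℝ => hk k p.1 p.2)
      (Set.Icc (-a) a ×ˢ Set.Icc 0 Thatt))
    (hbdd : ∀ k, ∀ x ∈ Set.Icc (-a) a, ∀ t ∈ Set.Icc (0:ℝ) Thatt, |hk k x t| ≤ A)
    (hunif : TendstoUniformlyOn (fun k (p : ℝ × ℝ) => hk k p.1 p.2)
      (fun p : ℝ × ℝ => h p.1 p.2) Filter.atTop (Set.Icc (-a) a ×ˢ Set.Icc 0 Thatt))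
    (hB : ∀ k, ∀ t ∈ Set.Icc (0:ℝ) Thatt,
      (∫ x in (-a)..a, GEps A (εk k) (hk k x t)) ≤ B) :
    ∀ t ∈ Set.Icc (0:ℝ) Thatt,
      MeasureTheory.IntegrableOn (fun x => 1 / h x t) (Set.Ioo (-a) a) ∧
      (∫ x in (-a)..a, 1 / h x t) ≤ 2 * (B + 2 * a / A) := by
  intro t ht
  have hΩ : Ioo (-a) a ⊆ Icc (-a) a := Ioo_subset_Icc_self
  have hslice : ∀ k, ContinuousOn (fun x => hk k x t) (Icc (-a) a) := fun k =>
    (hcont k).comp (Continuous.continuousOn (by fun_prop)) fun x hx => mk_mem_prod hx ht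
  have hinterval : ∀ f : ℝ → ℝ, ∫ x in (-a)..a, f x = ∫ x in Ioo (-a) a, f x := fun f => by
    rw [intervalIntegral.integral_of_le (by linarith), integral_Ioc_eq_integral_Ioo]
  have key := integrable_inv_of_integral_GEps_le (μ := volume.restrict (Ioo (-a) a))
    hA hεpos hεlim
    (fun k => ((hslice k).mono hΩ).aemeasurable measurableSet_Ioo)
    (fun k => ae_restrict_of_forall_mem measurableSet_Ioo fun x hx =>
      (le_abs_self _).trans (hbdd k x (hΩ hx) t ht))
    (ae_restrict_of_forall_mem measurableSet_Ioo fun x hx =>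
      hunif.tendsto_at (mk_mem_prod (hΩ hx) ht))
    (fun k =>
      ((continuous_GEps (hεpos k)).comp_continuousOn (hslice k)).integrableOn_Icc.mono_set hΩ)
    (fun k => hinterval _ ▸ hB k t ht)
  rw [measureReal_restrict_apply_univ, Real.volume_real_Ioo_of_le (by linarith), sub_neg_eq_add,
    ← two_mul] at key
  exact ⟨key.1, (hinterval _).trans_le key.2⟩

/-- Uniform bound on `∫ dx / h(x,t)` for the uniform limit: under uniformly bounded
entropies, `1/h(·,t)` is integrable on `Ω` with `∫ dx/h(x,t) ≤ 2(B + 2a/A)`. -/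
theorem limit_reciprocal_integrable_and_bounded
    (a Thatt A B : ℝ) (ha : 0 < a) (hThatt : 0 < Thatt) (hA : 0 < A)
    (εk : ℕ → ℝ) (hεpos : ∀ k, 0 < εk k)
    (hεlim : Filter.Tendsto εk Filter.atTop (nhds 0))
    (hk : ℕ → ℝ → ℝ → ℝ) (h : ℝ → ℝ → ℝ)
    (hcont : ∀ k, ContinuousOn (fun p : ℝ × ℝ => hk k p.1 p.2)
      (Set.Icc (-a) a ×ˢ Set.Icc 0 Thatt))
    (hbdd : ∀ k, ∀ x ∈ Set.Icc (-a) a, ∀ t ∈ Set.Icc (0:ℝ) Thatt, |hk k x t| ≤ A)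
    (hunif : TendstoUniformlyOn (fun k (p : ℝ × ℝ) => hk k p.1 p.2)
      (fun p : ℝ × ℝ => h p.1 p.2) Filter.atTop (Set.Icc (-a) a ×ˢ Set.Icc 0 Thatt))
    (hB : ∀ k, ∀ t ∈ Set.Icc (0:ℝ) Thatt,
      (∫ x in (-a)..a, GEps A (εk k) (hk k x t)) ≤ B) :
    ∀ t ∈ Set.Icc (0:ℝ) Thatt,
      MeasureTheory.IntegrableOn (fun x => 1 / h x t) (Set.Ioo (-a) a) ∧
      (∫ x in (-a)..a, 1 / h x t) ≤ 2 * (B + 2 * a / A) :=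
  limit_reciprocal_integrable_and_bounded_general a Thatt A B ha hA εk hεpos hεlim hk h hcont hbdd
    hunif hB
end

section
/- Let h be a nonnegative classical periodic solution of the regularized Model II equation on [0,T] satisfying the additional boundary condition, and define 𝓔̃(u) = (1/2)·∫_{−a}^{a} ( u_x(x)² − u(x)² − (4/(3S))·x·u(x) ) dx. Then for every T′ ∈ [0,T], 𝓔̃(h(·,T′)) + S·∫_0^{T′} ∫_{−a}^{a} (h³ + ε)·( ∂_x( h + h_xx + (2/(3S))·x ) )² dx dt = 𝓔̃(h(·,0)). -/
/-!
With `P = h + h_xx + 2x/(3S)` the equation reads `h_t = -∂ₓΦ` for the flux `Φ = S(h³+ε)∂ₓP`,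
and the additional boundary condition together with periodicity makes `∂ₓP`, hence `Φ`, vanish
at `±a`. One integration by parts then gives `∫ h_t P = ∫ Φ ∂ₓP = S ∫ (h³+ε)(∂ₓP)²`, while formally
`d𝓔̃/dt = -∫ h_t P`. As `h_xt` is not assumed to exist, the latter is derived from the exact
increment formula `𝓔̃(t₂) - 𝓔̃(t₁) = -½ ∫ (h(t₂) - h(t₁))(P(t₁) + P(t₂))` (a periodic integration by
parts) by dominated convergence of the difference quotients; the fundamental theorem of calculus
integrates the resulting identity in time.
-/

/-- A classical periodic solution of the regularized Model II equation
`h_t = -2h² h_x - S ∂_x[(h³+ε)(h_x+h_xxx)]` on `ℝ × [0,T]`, `2a`-periodic in `x`,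
with continuous partial derivatives `∂_x^j h`, `0 ≤ j ≤ 4`, and `∂_t h`. -/
structure ClassicalSolutionII (a S ε T : ℝ) (h hx hxx hxxx hxxxx ht : ℝ → ℝ → ℝ) : Prop where
  periodic_x : ∀ x t, h (x + 2 * a) t = h x t
  cont_h : ContinuousOn (fun p : ℝ × ℝ => h p.1 p.2) (Set.univ ×ˢ Set.Icc 0 T)
  cont_hx : ContinuousOn (fun p : ℝ × ℝ => hx p.1 p.2) (Set.univ ×ˢ Set.Icc 0 T)
  cont_hxx : ContinuousOn (fun p : ℝ × ℝ => hxx p.1 p.2) (Set.univ ×ˢ Set.Icc 0 T)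
  cont_hxxx : ContinuousOn (fun p : ℝ × ℝ => hxxx p.1 p.2) (Set.univ ×ˢ Set.Icc 0 T)
  cont_hxxxx : ContinuousOn (fun p : ℝ × ℝ => hxxxx p.1 p.2) (Set.univ ×ˢ Set.Icc 0 T)
  cont_ht : ContinuousOn (fun p : ℝ × ℝ => ht p.1 p.2) (Set.univ ×ˢ Set.Icc 0 T)
  deriv_hx : ∀ x : ℝ, ∀ t ∈ Set.Icc (0:ℝ) T, HasDerivAt (fun y => h y t) (hx x t) x
  deriv_hxx : ∀ x : ℝ, ∀ t ∈ Set.Icc (0:ℝ) T, HasDerivAt (fun y => hx y t) (hxx x t) x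
  deriv_hxxx : ∀ x : ℝ, ∀ t ∈ Set.Icc (0:ℝ) T, HasDerivAt (fun y => hxx y t) (hxxx x t) x
  deriv_hxxxx : ∀ x : ℝ, ∀ t ∈ Set.Icc (0:ℝ) T, HasDerivAt (fun y => hxxx y t) (hxxxx x t) x
  deriv_ht : ∀ x : ℝ, ∀ t ∈ Set.Icc (0:ℝ) T,
    HasDerivWithinAt (fun s => h x s) (ht x t) (Set.Icc 0 T) t
  /-- The PDE `h_t = -2h² h_x - S ∂_x[(h³+ε)(h_x+h_xxx)]`, stated as: the flux
  `S (h³+ε)(h_x+h_xxx)` has spatial derivative `-h_t - 2h² h_x`. -/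
  pde : ∀ x : ℝ, ∀ t ∈ Set.Icc (0:ℝ) T,
    HasDerivAt (fun y => S * (((h y t) ^ 3 + ε) * (hx y t + hxxx y t)))
      (-(ht x t) - 2 * (h x t)^2 * hx x t) x

open Set MeasureTheory intervalIntegral Filter Topology Function Interval

theorem Function.Periodic.periodic_of_hasDerivAt {f f' : ℝ → ℝ} {c : ℝ} (hf : Periodic f c)
    (hd : ∀ x, HasDerivAt f (f' x) x) : Periodic f' c := fun x => by
  have hshift : HasDerivAt (fun y => f (y + c)) (f' (x + c)) x := (hd (x + c)).comp_add_const x c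
  rw [show (fun y => f (y + c)) = f from funext hf] at hshift
  exact hshift.unique (hd x)

theorem Function.Periodic.apply_neg_eq_of_two_mul {f : ℝ → ℝ} {a : ℝ} (hf : Periodic f (2 * a)) :
    f (-a) = f a := by
  simpa [show -a + 2 * a = a by ring] using (hf (-a)).symm

theorem ContinuousOn.continuous_uncurry_right_of_univ {f : ℝ → ℝ → ℝ} {s : Set ℝ}
    (hf : ContinuousOn (uncurry f) (univ ×ˢ s)) {t : ℝ} (ht : t ∈ s) : Continuous (f · t) :=
  continuousOn_univ.mp (hf.uncurry_right t ht)

theorem continuousOn_intervalIntegral_of_continuousOn_prod {X : Type*} [TopologicalSpace X]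
    [FirstCountableTopology X] {f : ℝ → X → ℝ} {α β : ℝ} {K : Set X} (hK : IsCompact K)
    (hf : ContinuousOn (uncurry f) ([[α, β]] ×ˢ K)) :
    ContinuousOn (fun t => ∫ x in α..β, f x t) K := by
  obtain ⟨M, hM⟩ := (isCompact_uIcc.prod hK).exists_bound_of_continuousOn hf
  intro t ht
  refine continuousWithinAt_of_dominated_interval (bound := fun _ => M) ?_ ?_
    intervalIntegrable_const ?_
  · filter_upwards [self_mem_nhdsWithin] with s hs
    exact ((hf.uncurry_right s hs).mono uIoc_subset_uIcc).aestronglyMeasurable measurableSet_uIoc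
  · filter_upwards [self_mem_nhdsWithin] with s hs
    exact .of_forall fun x hx => hM (x, s) ⟨uIoc_subset_uIcc hx, hs⟩
  · exact .of_forall fun x hx => hf.uncurry_left x (uIoc_subset_uIcc hx) t ht

theorem hasDerivWithinAt_of_sub_eq_intervalIntegral {F : ℝ → ℝ} {u v p : ℝ → ℝ → ℝ}
    {α β c d t : ℝ}
    (hu : ContinuousOn (uncurry u) ([[α, β]] ×ˢ Icc c d))
    (hv : ContinuousOn (uncurry v) ([[α, β]] ×ˢ Icc c d))
    (hp : ContinuousOn (uncurry p) ([[α, β]] ×ˢ Icc c d))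
    (huv : ∀ x ∈ [[α, β]], ∀ s ∈ Icc c d, HasDerivWithinAt (u x) (v x s) (Icc c d) s)
    (hF : ∀ s ∈ Icc c d, F s - F t = ∫ x in α..β, (u x s - u x t) * p x s)
    (ht : t ∈ Icc c d) :
    HasDerivWithinAt F (∫ x in α..β, v x t * p x t) (Icc c d) t := by
  obtain ⟨Mv, hMv⟩ := (isCompact_uIcc.prod isCompact_Icc).exists_bound_of_continuousOn hv
  obtain ⟨Mp, hMp⟩ := (isCompact_uIcc.prod isCompact_Icc).exists_bound_of_continuousOn hp
  have hslope : ∀ s ∈ Icc c d \ {t}, slope F t s = ∫ x in α..β, slope (u x) t s * p x s := by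
    intro s hs
    simp only [slope_def_field, hF s hs.1, ← intervalIntegral.integral_div]
    exact integral_congr fun x _ => by ring
  rw [hasDerivWithinAt_iff_tendsto_slope]
  refine Tendsto.congr'
    (eventuallyEq_of_mem self_mem_nhdsWithin fun s hs => (hslope s hs).symm) ?_
  refine tendsto_integral_filter_of_dominated_convergence (bound := fun _ => Mv * Mp) ?_ ?_
    intervalIntegrable_const ?_
  · filter_upwards [self_mem_nhdsWithin] with s hs
    have hcont : ContinuousOn (fun x => slope (u x) t s * p x s) [[α, β]] := by
      simp only [slope_def_field]
      exact (((hu.uncurry_right s hs.1).sub (hu.uncurry_right t ht)).div_const _).mul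
        (hp.uncurry_right s hs.1)
    exact (hcont.mono uIoc_subset_uIcc).aestronglyMeasurable measurableSet_uIoc
  · filter_upwards [self_mem_nhdsWithin] with s hs
    refine .of_forall fun x hx => ?_
    have hx' := uIoc_subset_uIcc hx
    have hst : 0 < ‖s - t‖ := norm_pos_iff.mpr (sub_ne_zero.mpr hs.2)
    have hMv0 : 0 ≤ Mv := (norm_nonneg _).trans (hMv (x, t) ⟨hx', ht⟩)
    have hlip : ‖u x s - u x t‖ ≤ Mv * ‖s - t‖ :=
      Convex.norm_image_sub_le_of_norm_hasDerivWithin_le (huv x hx')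
        (fun r hr => hMv (x, r) ⟨hx', hr⟩) (convex_Icc c d) ht hs.1
    rw [norm_mul, slope_def_field, norm_div]
    exact mul_le_mul (div_le_of_le_mul₀ hst.le hMv0 hlip) (hMp (x, s) ⟨hx', hs.1⟩)
      (norm_nonneg _) hMv0
  · refine .of_forall fun x hx => ?_
    have hx' := uIoc_subset_uIcc hx
    exact (hasDerivWithinAt_iff_tendsto_slope.mp (huv x hx' t ht)).mul
      ((hp.uncurry_left x hx' t ht).mono sdiff_subset)

noncomputable def energyII (a S : ℝ) (u u' : ℝ → ℝ) : ℝ :=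
  (1/2) * (∫ x in (-a)..a, ((u' x)^2 - (u x)^2 - (4 / (3 * S)) * x * u x))

namespace ClassicalSolutionII

variable {a S ε T : ℝ} {h hx hxx hxxx hxxxx ht : ℝ → ℝ → ℝ}

theorem periodic_h (hsol : ClassicalSolutionII a S ε T h hx hxx hxxx hxxxx ht) (t : ℝ) :
    Periodic (h · t) (2 * a) :=
  fun x => hsol.periodic_x x t

theorem periodic_hx (hsol : ClassicalSolutionII a S ε T h hx hxx hxxx hxxxx ht) {t : ℝ}
    (ht : t ∈ Icc 0 T) : Periodic (hx · t) (2 * a) :=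
  (hsol.periodic_h t).periodic_of_hasDerivAt (hsol.deriv_hx · t ht)

theorem periodic_hxx (hsol : ClassicalSolutionII a S ε T h hx hxx hxxx hxxxx ht) {t : ℝ}
    (ht : t ∈ Icc 0 T) : Periodic (hxx · t) (2 * a) :=
  (hsol.periodic_hx ht).periodic_of_hasDerivAt (hsol.deriv_hxx · t ht)

theorem periodic_hxxx (hsol : ClassicalSolutionII a S ε T h hx hxx hxxx hxxxx ht) {t : ℝ}
    (ht : t ∈ Icc 0 T) : Periodic (hxxx · t) (2 * a) :=
  (hsol.periodic_hxx ht).periodic_of_hasDerivAt (hsol.deriv_hxxx · t ht)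

theorem energyII_sub (hsol : ClassicalSolutionII a S ε T h hx hxx hxxx hxxxx ht) {t₁ t₂ : ℝ}
    (h₁ : t₁ ∈ Icc 0 T) (h₂ : t₂ ∈ Icc 0 T) :
    energyII a S (h · t₂) (hx · t₂) - energyII a S (h · t₁) (hx · t₁) =
      ∫ x in (-a)..a, (h x t₂ - h x t₁) *
        (-(1/2) * ((h x t₁ + hxx x t₁ + 2 / (3 * S) * x)
          + (h x t₂ + hxx x t₂ + 2 / (3 * S) * x))) := by
  have c1 := hsol.cont_h.continuous_uncurry_right_of_univ h₁
  have c2 := hsol.cont_h.continuous_uncurry_right_of_univ h₂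
  have cx1 := hsol.cont_hx.continuous_uncurry_right_of_univ h₁
  have cx2 := hsol.cont_hx.continuous_uncurry_right_of_univ h₂
  have cxx1 := hsol.cont_hxx.continuous_uncurry_right_of_univ h₁
  have cxx2 := hsol.cont_hxx.continuous_uncurry_right_of_univ h₂
  have hbdry := integral_deriv_mul_eq_sub (a := -a) (b := a)
    (u := fun x => h x t₂ - h x t₁) (v := fun x => hx x t₁ + hx x t₂)
    (fun x _ => (hsol.deriv_hx x t₂ h₂).sub (hsol.deriv_hx x t₁ h₁))
    (fun x _ => (hsol.deriv_hxx x t₁ h₁).add (hsol.deriv_hxx x t₂ h₂))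
    (by apply Continuous.intervalIntegrable; fun_prop)
    (by apply Continuous.intervalIntegrable; fun_prop)
  have hbdry_zero : (h a t₂ - h a t₁) * (hx a t₁ + hx a t₂)
      - (h (-a) t₂ - h (-a) t₁) * (hx (-a) t₁ + hx (-a) t₂) = 0 := by
    simp only [(hsol.periodic_h _).apply_neg_eq_of_two_mul,
      (hsol.periodic_hx h₁).apply_neg_eq_of_two_mul, (hsol.periodic_hx h₂).apply_neg_eq_of_two_mul,
      sub_self]
  -- the energy increment minus the claimed integral is `½ ∫ ∂ₓ[(h(t₂) - h(t₁))(h_x(t₁) + h_x(t₂))]`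
  rw [energyII, energyII, ← mul_sub,
    ← intervalIntegral.integral_sub (by apply Continuous.intervalIntegrable; fun_prop)
      (by apply Continuous.intervalIntegrable; fun_prop),
    ← sub_eq_zero, ← intervalIntegral.integral_const_mul,
    ← intervalIntegral.integral_sub (by apply Continuous.intervalIntegrable; fun_prop)
      (by apply Continuous.intervalIntegrable; fun_prop),
    ← mul_zero (1 / 2 : ℝ), ← hbdry_zero, ← hbdry, ← intervalIntegral.integral_const_mul]
  exact intervalIntegral.integral_congr fun x _ => by ring

theorem hasDerivWithinAt_energyII (hsol : ClassicalSolutionII a S ε T h hx hxx hxxx hxxxx ht)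
    {t : ℝ} (htT : t ∈ Icc 0 T) :
    HasDerivWithinAt (fun s => energyII a S (h · s) (hx · s))
      (-∫ x in (-a)..a, ht x t * (h x t + hxx x t + 2 / (3 * S) * x)) (Icc 0 T) t := by
  have hsub : [[-a, a]] ×ˢ Icc 0 T ⊆ univ ×ˢ Icc 0 T := prod_mono (subset_univ _) subset_rfl
  have hP : ContinuousOn (uncurry fun x s =>
      -(1/2) * ((h x t + hxx x t + 2 / (3 * S) * x) + (h x s + hxx x s + 2 / (3 * S) * x)))
      ([[-a, a]] ×ˢ Icc 0 T) := by
    have c := hsol.cont_h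
    have cxx := hsol.cont_hxx
    have ct := hsol.cont_h.continuous_uncurry_right_of_univ htT
    have cxxt := hsol.cont_hxx.continuous_uncurry_right_of_univ htT
    refine ContinuousOn.mono ?_ hsub
    fun_prop
  refine (hasDerivWithinAt_of_sub_eq_intervalIntegral (hsol.cont_h.mono hsub)
    (hsol.cont_ht.mono hsub) hP (fun x _ s hs => hsol.deriv_ht x s hs)
    (fun s hs => hsol.energyII_sub htT hs) htT).congr_deriv ?_
  rw [← intervalIntegral.integral_neg]
  exact intervalIntegral.integral_congr fun x _ => by ring

theorem hasDerivAt_flux (hsol : ClassicalSolutionII a S ε T h hx hxx hxxx hxxxx ht) (hS : S ≠ 0)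
    {t : ℝ} (htT : t ∈ Icc 0 T) (x : ℝ) :
    HasDerivAt (fun y => S * ((h y t) ^ 3 + ε) * (hx y t + hxxx y t + 2 / (3 * S)))
      (-ht x t) x := by
  have hd := (hsol.pde x t htT).fun_add
    ((((hsol.deriv_hx x t htT).fun_pow 3).add_const ε).const_mul (2 / 3))
  have hflux : (fun y => S * ((h y t) ^ 3 + ε) * (hx y t + hxxx y t + 2 / (3 * S))) =
      fun y => S * (((h y t) ^ 3 + ε) * (hx y t + hxxx y t)) + 2 / 3 * ((h y t) ^ 3 + ε) := by
    funext y
    field_simp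
  rw [hflux]
  exact hd.congr_deriv (by push_cast; ring)

theorem integral_ht_mul_potential (hsol : ClassicalSolutionII a S ε T h hx hxx hxxx hxxxx ht)
    (hS : S ≠ 0) {t : ℝ} (htT : t ∈ Icc 0 T) (hwl : hx (-a) t + hxxx (-a) t + 2 / (3 * S) = 0)
    (hwr : hx a t + hxxx a t + 2 / (3 * S) = 0) :
    ∫ x in (-a)..a, ht x t * (h x t + hxx x t + 2 / (3 * S) * x) =
      S * ∫ x in (-a)..a, ((h x t) ^ 3 + ε) * (hx x t + hxxx x t + 2 / (3 * S)) ^ 2 := by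
  have c := hsol.cont_h.continuous_uncurry_right_of_univ htT
  have cx := hsol.cont_hx.continuous_uncurry_right_of_univ htT
  have cxx := hsol.cont_hxx.continuous_uncurry_right_of_univ htT
  have cxxx := hsol.cont_hxxx.continuous_uncurry_right_of_univ htT
  have ct := hsol.cont_ht.continuous_uncurry_right_of_univ htT
  have hP : ∀ x, HasDerivAt (fun y => h y t + hxx y t + 2 / (3 * S) * y)
      (hx x t + hxxx x t + 2 / (3 * S)) x := fun x => by
    simpa using ((hsol.deriv_hx x t htT).fun_add (hsol.deriv_hxxx x t htT)).fun_add
      ((hasDerivAt_id x).const_mul (2 / (3 * S)))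
  have hbdry := integral_deriv_mul_eq_sub (a := -a) (b := a)
    (fun x _ => hsol.hasDerivAt_flux hS htT x)
    (fun x _ => hP x) (by apply Continuous.intervalIntegrable; fun_prop)
    (by apply Continuous.intervalIntegrable; fun_prop)
  simp only [hwl, hwr, mul_zero, zero_mul, sub_zero] at hbdry
  rw [← intervalIntegral.integral_const_mul, ← sub_eq_zero,
    ← intervalIntegral.integral_sub (by apply Continuous.intervalIntegrable; fun_prop)
      (by apply Continuous.intervalIntegrable; fun_prop),
    ← neg_eq_zero, ← intervalIntegral.integral_neg, ← hbdry]
  exact intervalIntegral.integral_congr fun x _ => by ring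

theorem deriv_potential_eq_zero_of_bc (hsol : ClassicalSolutionII a S ε T h hx hxx hxxx hxxxx ht)
    (ha : a ≠ 0) {t : ℝ} (htT : t ∈ Icc 0 T)
    (hbc : a * (hx a t + hxxx a t + 2 / (3 * S))
      + a * (hx (-a) t + hxxx (-a) t + 2 / (3 * S)) = 0) :
    hx (-a) t + hxxx (-a) t + 2 / (3 * S) = 0 ∧ hx a t + hxxx a t + 2 / (3 * S) = 0 := by
  rw [(hsol.periodic_hx htT).apply_neg_eq_of_two_mul,
    (hsol.periodic_hxxx htT).apply_neg_eq_of_two_mul] at hbc ⊢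
  have hw : (2 * a) * (hx a t + hxxx a t + 2 / (3 * S)) = 0 := by linarith
  have := (mul_eq_zero.mp hw).resolve_left (mul_ne_zero two_ne_zero ha)
  exact ⟨this, this⟩

end ClassicalSolutionII

theorem modelII_energy_identity_general
    (a S ε T : ℝ) (ha : 0 < a) (hS : 0 < S)
    (h hx hxx hxxx hxxxx ht : ℝ → ℝ → ℝ)
    (hsol : ClassicalSolutionII a S ε T h hx hxx hxxx hxxxx ht)
    (hbc : ∀ t ∈ Set.Icc (0:ℝ) T,
      a * (hx a t + hxxx a t + 2 / (3 * S))
        + a * (hx (-a) t + hxxx (-a) t + 2 / (3 * S)) = 0) :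
    ∀ T' ∈ Set.Icc (0:ℝ) T,
      (1/2) * (∫ x in (-a)..a,
          ((hx x T')^2 - (h x T')^2 - (4 / (3 * S)) * x * h x T'))
        + S * ∫ t in (0:ℝ)..T', ∫ x in (-a)..a,
            ((h x t) ^ 3 + ε) * (hx x t + hxxx x t + 2 / (3 * S))^2
      = (1/2) * (∫ x in (-a)..a,
          ((hx x 0)^2 - (h x 0)^2 - (4 / (3 * S)) * x * h x 0)) := by
  intro T' hT'
  set J := fun t => ∫ x in (-a)..a, ((h x t) ^ 3 + ε) * (hx x t + hxxx x t + 2 / (3 * S)) ^ 2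
  have hderiv : ∀ t ∈ Icc 0 T,
      HasDerivWithinAt (fun s => energyII a S (h · s) (hx · s)) (-(S * J t)) (Icc 0 T) t := by
    intro t ht
    obtain ⟨hwl, hwr⟩ := hsol.deriv_potential_eq_zero_of_bc ha.ne' ht (hbc t ht)
    simpa only [hsol.integral_ht_mul_potential hS.ne' ht hwl hwr] using
      hsol.hasDerivWithinAt_energyII ht
  have hJ : ContinuousOn J (Icc 0 T) :=
    continuousOn_intervalIntegral_of_continuousOn_prod isCompact_Icc
      ((((hsol.cont_h.pow 3).add continuousOn_const).mul
        (((hsol.cont_hx.add hsol.cont_hxxx).add continuousOn_const).pow 2)).mono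
          (prod_mono (subset_univ _) subset_rfl))
  have hsub : Icc 0 T' ⊆ Icc 0 T := Icc_subset_Icc_right hT'.2
  have hftc := integral_eq_sub_of_hasDerivAt_of_le hT'.1
    (fun t ht => (hderiv t (hsub ht)).continuousWithinAt.mono hsub)
    (fun t ht => (hderiv t (hsub (Ioo_subset_Icc_self ht))).hasDerivAt
      (Icc_mem_nhds ht.1 (ht.2.trans_le hT'.2)))
    (ContinuousOn.intervalIntegrable_of_Icc hT'.1 ((hJ.mono hsub).const_mul S).fun_neg)
  rw [intervalIntegral.integral_neg, intervalIntegral.integral_const_mul] at hftc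
  change energyII a S (h · T') (hx · T') + S * ∫ t in (0:ℝ)..T', J t
    = energyII a S (h · 0) (hx · 0)
  linarith

/-- Energy identity for regularized Model II: with
`𝓔̃(u) = (1/2)∫ (u_x² - u² - (4/(3S)) x u) dx`,
`𝓔̃(h(·,T')) + S∫₀^{T'}∫ (h³+ε)(∂_x(h + h_xx + (2/(3S))x))² = 𝓔̃(h(·,0))`
for nonnegative solutions satisfying the additional boundary condition. -/
theorem modelII_energy_identity
    (a S ε T : ℝ) (ha : 0 < a) (hS : 0 < S) (hε : 0 < ε) (hT : 0 < T)
    (h hx hxx hxxx hxxxx ht : ℝ → ℝ → ℝ)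
    (hsol : ClassicalSolutionII a S ε T h hx hxx hxxx hxxxx ht)
    (hnonneg : ∀ x : ℝ, ∀ t ∈ Set.Icc (0:ℝ) T, 0 ≤ h x t)
    (hbc : ∀ t ∈ Set.Icc (0:ℝ) T,
      a * (hx a t + hxxx a t + 2 / (3 * S))
        + a * (hx (-a) t + hxxx (-a) t + 2 / (3 * S)) = 0) :
    ∀ T' ∈ Set.Icc (0:ℝ) T,
      (1/2) * (∫ x in (-a)..a,
          ((hx x T')^2 - (h x T')^2 - (4 / (3 * S)) * x * h x T'))
        + S * ∫ t in (0:ℝ)..T', ∫ x in (-a)..a,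
            ((h x t) ^ 3 + ε) * (hx x t + hxxx x t + 2 / (3 * S))^2
      = (1/2) * (∫ x in (-a)..a,
          ((hx x 0)^2 - (h x 0)^2 - (4 / (3 * S)) * x * h x 0)) :=
  modelII_energy_identity_general a S ε T ha hS h hx hxx hxxx hxxxx ht hsol hbc
end
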